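/- Let φ be an isometry of a Riemannian manifold, p a point with φ^{n_0}(p) = p for some positive integer n_0, and let K := {φ^i(p) : 0 ≤ i < n_0} be the finite orbit, contained in a region where metric balls are convex. Then there exists exactly one closed metric ball B_r(x) of minimal radius r containing K; in particular, if two balls of the same minimal radius r both contain K, their centers coincide. -/

import Mathlib

/-!
Radii of enclosing balls can be pushed down to their infimum because, in a proper space,
centres of nearly optimal balls accumulate. If two optimal balls had distinct centres, strict
convexity would put the finite set `K` inside an open ball of the optimal radius about their
midpoint, and since `K` is closed, inside a closed ball of strictly smaller radius.
-/

open Filter Topology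

namespace Metric

variable {M : Type*} [PseudoMetricSpace M]

noncomputable def chebyshevRadius (K : Set M) : ℝ :=
  sInf {r : ℝ | ∃ x : M, K ⊆ closedBall x r}

theorem bddBelow_enclosingRadii {K : Set M} (hK : K.Nonempty) :
    BddBelow {r : ℝ | ∃ x : M, K ⊆ closedBall x r} := by
  obtain ⟨z, hz⟩ := hK
  exact ⟨0, fun r ⟨x, hx⟩ => dist_nonneg.trans (hx hz)⟩

theorem chebyshevRadius_le {K : Set M} (hK : K.Nonempty) {x : M} {r : ℝ}
    (h : K ⊆ closedBall x r) : chebyshevRadius K ≤ r :=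
  csInf_le (bddBelow_enclosingRadii hK) ⟨x, h⟩

theorem exists_subset_closedBall_chebyshevRadius [ProperSpace M] {K : Set M}
    (hK : K.Nonempty) (hKb : Bornology.IsBounded K) :
    ∃ x : M, K ⊆ closedBall x (chebyshevRadius K) := by
  set r₀ := chebyshevRadius K
  have hS : {r : ℝ | ∃ x : M, K ⊆ closedBall x r}.Nonempty :=
    let ⟨r, hr⟩ := hKb.subset_closedBall hK.some
    ⟨r, _, hr⟩
  have hnear : ∀ n : ℕ, ∃ x : M, K ⊆ closedBall x (r₀ + 1 / (n + 1)) := fun n => by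
    obtain ⟨r, ⟨x, hx⟩, hr⟩ :=
      exists_lt_of_csInf_lt hS (lt_add_of_pos_right r₀ n.one_div_pos_of_nat)
    exact ⟨x, hx.trans (closedBall_subset_closedBall hr.le)⟩
  choose x hx using hnear
  obtain ⟨z, hz⟩ := hK
  have hx_near_z : ∀ n, x n ∈ closedBall z (r₀ + 1) := fun n => by
    rw [mem_closedBall, dist_comm]
    have : (1 : ℝ) / (n + 1) ≤ 1 :=
      div_le_one_of_le₀ (le_add_of_nonneg_left n.cast_nonneg) (by positivity)
    linarith [mem_closedBall.1 (hx n hz)]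
  obtain ⟨a, -, ψ, hψ, hlim⟩ := tendsto_subseq_of_bounded isBounded_closedBall hx_near_z
  have hradius : Tendsto (fun n => r₀ + 1 / ((ψ n : ℝ) + 1)) atTop (𝓝 r₀) := by
    simpa using (tendsto_const_nhds (x := r₀)).add
      (tendsto_one_div_add_atTop_nhds_zero_nat.comp hψ.tendsto_atTop)
  exact ⟨a, fun w hw => le_of_tendsto_of_tendsto' (tendsto_const_nhds.dist hlim) hradius
    fun n => hx (ψ n) hw⟩

theorem not_subset_ball_chebyshevRadius [ProperSpace M] {K : Set M} (hKc : IsClosed K)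
    (hK : K.Nonempty) (m : M) : ¬ K ⊆ ball m (chebyshevRadius K) := fun h => by
  obtain ⟨r, hr, hKr⟩ := exists_lt_subset_ball hKc h
  exact (chebyshevRadius_le hK (hKr.trans ball_subset_closedBall)).not_gt hr

end Metric

theorem unique_minimal_enclosing_ball_of_finite_orbit_general
    {M : Type*} [MetricSpace M] [ProperSpace M]
    (φ : M → M)
    (p : M) (n₀ : ℕ) (hn₀ : 0 < n₀)
    (K : Set M) (hK : K = {x : M | ∃ i : ℕ, i < n₀ ∧ φ^[i] p = x})
    (R : Set M) (hKR : K ⊆ R)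
    -- the Riemannian midpoint operation
    (mid : M → M → M)
    -- convexity of metric balls, as seen from the region `R` containing `K`
    (hconv : ∀ (z x y : M) (r : ℝ), z ∈ R → x ≠ y →
      dist z x ≤ r → dist z y ≤ r → dist z (mid x y) < r)
    -- the minimal radius of a closed ball containing `K`
    (r₀ : ℝ) (hr₀ : r₀ = sInf {r : ℝ | ∃ x : M, K ⊆ Metric.closedBall x r}) :
    (∃! x : M, K ⊆ Metric.closedBall x r₀) ∧
      ∀ x₁ x₂ : M, K ⊆ Metric.closedBall x₁ r₀ →
        K ⊆ Metric.closedBall x₂ r₀ → x₁ = x₂ := by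
  change r₀ = Metric.chebyshevRadius K at hr₀
  have hKfin : K.Finite := hK ▸ (Set.finite_lt_nat n₀).image fun i => φ^[i] p
  have hKne : K.Nonempty := ⟨p, hK ▸ ⟨0, hn₀, rfl⟩⟩
  have huniq : ∀ x₁ x₂ : M, K ⊆ Metric.closedBall x₁ r₀ →
      K ⊆ Metric.closedBall x₂ r₀ → x₁ = x₂ := by
    intro x₁ x₂ h₁ h₂
    by_contra hne
    refine Metric.not_subset_ball_chebyshevRadius hKfin.isClosed hKne (mid x₁ x₂) fun z hz => ?_
    exact hr₀ ▸ hconv z x₁ x₂ r₀ (hKR hz) hne (h₁ hz) (h₂ hz)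
  obtain ⟨x, hx⟩ := Metric.exists_subset_closedBall_chebyshevRadius hKne hKfin.isBounded
  exact ⟨⟨x, hr₀ ▸ hx, fun y hy => huniq y x hy (hr₀ ▸ hx)⟩, huniq⟩

/-- Let `φ` be an isometry of a Riemannian manifold, `p` a
point with `φ^[n₀] p = p` for some positive integer `n₀`, and let
`K := {φ^[i] p : 0 ≤ i < n₀}` be the finite orbit, contained in a region `R`
where metric balls are convex.  Then there exists exactly one closed metric
ball `B_{r₀} x` of minimal radius `r₀` containing `K`; in particular, if two
balls of the same minimal radius `r₀` both contain `K`, their centres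
coincide. -/
theorem unique_minimal_enclosing_ball_of_finite_orbit
    {M : Type*} [MetricSpace M] [ProperSpace M]
    (φ : M → M) (hφ : Isometry φ)
    (p : M) (n₀ : ℕ) (hn₀ : 0 < n₀) (hper : φ^[n₀] p = p)
    (K : Set M) (hK : K = {x : M | ∃ i : ℕ, i < n₀ ∧ φ^[i] p = x})
    (R : Set M) (hKR : K ⊆ R)
    -- the Riemannian midpoint operation
    (mid : M → M → M)
    (hmid₁ : ∀ x y : M, dist x (mid x y) = dist x y / 2)
    (hmid₂ : ∀ x y : M, dist y (mid x y) = dist x y / 2)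
    -- convexity of metric balls, as seen from the region `R` containing `K`
    (hconv : ∀ (z x y : M) (r : ℝ), z ∈ R → x ≠ y →
      dist z x ≤ r → dist z y ≤ r → dist z (mid x y) < r)
    -- the minimal radius of a closed ball containing `K`
    (r₀ : ℝ) (hr₀ : r₀ = sInf {r : ℝ | ∃ x : M, K ⊆ Metric.closedBall x r}) :
    (∃! x : M, K ⊆ Metric.closedBall x r₀) ∧
      ∀ x₁ x₂ : M, K ⊆ Metric.closedBall x₁ r₀ →
        K ⊆ Metric.closedBall x₂ r₀ → x₁ = x₂ :=
  unique_minimal_enclosing_ball_of_finite_orbit_general φ p n₀ hn₀ K hK R hKR mid hconv r₀ hr₀
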